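/- If X is a set, then its lifting L(X) ordered by l ⊑ m := (isdefined(l) → l = m) is a subsingleton-complete poset with least element: every family u : P → L(X) indexed by a proposition P has a least upper bound, given by (Σ (p : P), isdefined(u_p), (p,d) ↦ value(u_p)(d)). -/

import Mathlib

/-- The lifting of a type: pairs of a proposition and a value function. -/
def Lift (X : Type) : Type := Σ P : Prop, (P → X)

/-- The least element of the lifting. -/
def liftBot (X : Type) : Lift X := ⟨False, fun h => h.elim⟩

/-- The unit of the lifting monad. -/
def liftEta {X : Type} (x : X) : Lift X := ⟨True, fun _ => x⟩

/-- The order on the lifting: `l ⊑ m` iff `l` defined implies `l = m`. -/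
def LiftLE {X : Type} (l m : Lift X) : Prop := l.1 → l = m

/-- Kleisli extension of `f : X → Lift Y`. -/
noncomputable def kext {X Y : Type} (f : X → Lift Y) (l : Lift X) : Lift Y :=
  ⟨∃ p : l.1, (f (l.2 p)).1, fun h => (f (l.2 h.choose)).2 h.choose_spec⟩

/-- A type is a set if its identity types are propositions. -/
def IsSet (X : Type) : Prop := ∀ (x y : X) (p q : x = y), p = q

/-- Directedness of a family in the lifting, w.r.t. `LiftLE`. -/
def LDir {X I : Type} (u : I → Lift X) : Prop :=
  Nonempty I ∧ ∀ i j : I, ∃ k : I, LiftLE (u i) (u k) ∧ LiftLE (u j) (u k)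

/-- Least upper bounds in the lifting, w.r.t. `LiftLE`. -/
def LIsLUB {X I : Type} (u : I → Lift X) (d : Lift X) : Prop :=
  (∀ i, LiftLE (u i) d) ∧ ∀ e : Lift X, (∀ i, LiftLE (u i) e) → LiftLE d e

variable {X : Type}

theorem Lift.ext {l m : Lift X} (hdef : l.1 ↔ m.1) (hval : ∀ a b, l.2 a = m.2 b) : l = m := by
  obtain ⟨P, f⟩ := l
  obtain ⟨Q, g⟩ := m
  obtain rfl : P = Q := propext hdef
  exact congrArg _ (funext fun a => hval a a)

theorem liftBot_le (l : Lift X) : LiftLE (liftBot X) l :=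
  False.elim

/-- The paper's `Σ (p : P), isdefined (u p)` is a proposition, i.e. `∃`, from which `Exists.fst`
recovers `p` because `P` is a proposition too. -/
def liftSup {P : Prop} (u : P → Lift X) : Lift X :=
  ⟨∃ p, (u p).1, fun h => (u h.fst).2 h.snd⟩

section liftSup

variable {P : Prop} (u : P → Lift X)

/-- By proof irrelevance all members of a family indexed by a proposition coincide. -/
theorem liftSup_eq (p : P) : liftSup u = u p :=
  Lift.ext ⟨fun h => h.snd, fun h => ⟨p, h⟩⟩ fun _ _ => rfl

theorem le_liftSup (p : P) : LiftLE (u p) (liftSup u) :=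
  fun _ => (liftSup_eq u p).symm

theorem liftSup_le {e : Lift X} (he : ∀ p, LiftLE (u p) e) : LiftLE (liftSup u) e := by
  rintro ⟨p, hp⟩
  rw [liftSup_eq u p]
  exact he p hp

end liftSup

theorem lift_subsingleton_complete_general {X : Type} :
    (∀ l : Lift X, LiftLE (liftBot X) l) ∧
    (∀ (P : Prop) (u : P → Lift X),
      ∃ v : Lift X, v.1 = (∃ p : P, (u p).1) ∧
        (∀ (p : P) (h : (u p).1) (q : v.1), v.2 q = (u p).2 h) ∧
        (∀ p : P, LiftLE (u p) v) ∧
        (∀ e : Lift X, (∀ p : P, LiftLE (u p) e) → LiftLE v e)) :=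
  ⟨liftBot_le, fun _ u =>
    ⟨liftSup u, rfl, fun _ _ _ => rfl, le_liftSup u, fun _ => liftSup_le u⟩⟩

/-- If `X` is a set, its lifting (ordered by `LiftLE`) is a subsingleton
complete poset with a least element: every family indexed by a proposition has
a least upper bound, with the stated definedness proposition and values. -/
theorem lift_subsingleton_complete {X : Type} (hX : IsSet X) :
    (∀ l : Lift X, LiftLE (liftBot X) l) ∧
    (∀ (P : Prop) (u : P → Lift X),
      ∃ v : Lift X, v.1 = (∃ p : P, (u p).1) ∧
        (∀ (p : P) (h : (u p).1) (q : v.1), v.2 q = (u p).2 h) ∧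
        (∀ p : P, LiftLE (u p) v) ∧
        (∀ e : Lift X, (∀ p : P, LiftLE (u p) e) → LiftLE v e)) :=
  lift_subsingleton_complete_general
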